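/- Let (p_{i,j}) be a non-degenerate model with small steps and zero drift and let K(x,y) = Σ_{(i,j)} p_{i,j} x^{1−i} y^{1−j} − xy ∈ ℂ[x,y] be its kernel. If N ∈ ℂ[x,y] is a polynomial that vanishes at every point (x₀,y₀) ∈ ℂ² with K(x₀,y₀) = 0, then K divides N in ℂ[x,y]. -/

import Mathlib

/-!
By the Nullstellensatz `N` lies in the radical of `(K)`, so it suffices that `K` is squarefree.
As a polynomial in `y` over `ℂ[x]`, `K = A y² + B y + C` with `A, B, C` quadratic in `x`.
Non-degeneracy forbids a common root of `A`, `B`, `C` (so `K` is primitive) and forbids the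
discriminant `B² - 4AC` from vanishing identically (so `K` is separable over `ℂ(x)`); a primitive
polynomial that is separable over the fraction field is squarefree.
-/

open Finset

/-- The set of possible small steps `{-1,0,1} × {-1,0,1}` (the step `(0,0)` is excluded
via the support condition of the model). -/
def SmallStepGrid : Finset (ℤ × ℤ) := ({-1, 0, 1} : Finset ℤ) ×ˢ ({-1, 0, 1} : Finset ℤ)

/-- A model with small steps: nonnegative weights `p i j` supported on
`{-1,0,1}² \ {(0,0)}` summing to `1`. -/
structure SmallStepModel where
  p : ℤ → ℤ → ℝ
  nonneg : ∀ u v, 0 ≤ p u v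
  supp : ∀ u v, p u v ≠ 0 → ((u, v) ∈ SmallStepGrid ∧ (u, v) ≠ (0, 0))
  sum_one : ∑ uv ∈ SmallStepGrid, p uv.1 uv.2 = 1

/-- Zero drift: both coordinates of the mean step vanish. -/
def SmallStepModel.ZeroDrift (M : SmallStepModel) : Prop :=
  (∑ uv ∈ SmallStepGrid, (uv.1 : ℝ) * M.p uv.1 uv.2 = 0) ∧
  (∑ uv ∈ SmallStepGrid, (uv.2 : ℝ) * M.p uv.1 uv.2 = 0)

/-- The cyclic list of the eight boundary weights. -/
def SmallStepModel.cyc (M : SmallStepModel) : Fin 8 → ℝ :=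
  ![M.p 1 1, M.p 1 0, M.p 1 (-1), M.p 0 (-1), M.p (-1) (-1), M.p (-1) 0, M.p (-1) 1,
    M.p 0 1]

/-- Non-degeneracy: the cyclic list of the eight weights contains no
three consecutive zeros. -/
def SmallStepModel.NonDegenerate (M : SmallStepModel) : Prop :=
  ∀ k : Fin 8, ¬(M.cyc k = 0 ∧ M.cyc (k + 1) = 0 ∧ M.cyc (k + 2) = 0)


/-- The kernel `K(x,y) = Σ_{(i,j)} p_{i,j} x^{1−i} y^{1−j} − xy` of the model, as a
polynomial in `ℂ[x,y]`. -/
noncomputable def kernelPoly (M : SmallStepModel) : MvPolynomial (Fin 2) ℂ :=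
  (∑ uv ∈ SmallStepGrid, MvPolynomial.C ((M.p uv.1 uv.2 : ℝ) : ℂ) *
      MvPolynomial.X 0 ^ (1 - uv.1).toNat * MvPolynomial.X 1 ^ (1 - uv.2).toNat)
    - MvPolynomial.X 0 * MvPolynomial.X 1

open Polynomial

theorem Squarefree.map_mulEquiv {R S : Type*} [Monoid R] [Monoid S] (e : R ≃* S) {x : R}
    (hx : Squarefree x) : Squarefree (e x) := fun y hy =>
  (isUnit_map_iff e.symm y).1 (hx _ (by simpa using map_dvd e.symm hy))

namespace Polynomial

theorem separable_of_isUnit_discrim {R : Type*} [CommRing R] {a b c : R}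
    (h : IsUnit (discrim a b c)) : (C a * X ^ 2 + C b * X + C c).Separable := by
  obtain ⟨u, hu⟩ := h
  set f := C a * X ^ 2 + C b * X + C c
  set f' := C (2 * a) * X + C b
  have hder : derivative f = f' := by
    simp only [f, f', derivative_add, derivative_C_mul_X_pow, derivative_C_mul_X, derivative_C,
      map_mul, Nat.cast_ofNat, map_ofNat]
    ring
  have hbezout : f' ^ 2 - C (4 * a) * f = C (discrim a b c) := by
    simp only [f, f', discrim, map_sub, map_mul, map_pow, map_ofNat]
    ring
  refine (separable_def' f).2 ⟨C (↑u⁻¹ : R) * -C (4 * a), C (↑u⁻¹ : R) * f', ?_⟩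
  calc _ = C (↑u⁻¹ : R) * (f' ^ 2 - C (4 * a) * f) := by rw [hder]; ring
    _ = 1 := by rw [hbezout, ← hu, ← C_mul, Units.inv_mul, C_1]

theorem IsPrimitive.squarefree_of_separable_map {R K : Type*} [CommRing R] [Field K]
    {f : R →+* K} (hf : Function.Injective f) {p : R[X]} (hp : p.IsPrimitive)
    (hs : (p.map f).Separable) : Squarefree p := by
  intro q hq
  have hunit : IsUnit (q.map f) :=
    hs.squarefree _ (by simpa only [Polynomial.map_mul] using Polynomial.map_dvd f hq)
  have hdeg : q.degree = 0 := by
    rwa [← degree_map_eq_of_injective hf, ← isUnit_iff_degree_eq_zero]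
  rw [eq_C_of_degree_eq_zero hdeg] at hq ⊢
  exact isUnit_C.2 (hp _ (dvd_trans (dvd_mul_right _ _) hq))

theorem isPrimitive_of_forall_exists_eval_coeff_ne_zero {k : Type*} [Field k] [IsAlgClosed k]
    {p : k[X][X]} (h : ∀ z : k, ∃ n, (p.coeff n).eval z ≠ 0) : p.IsPrimitive := by
  intro r hr
  by_contra hru
  obtain ⟨z, hz⟩ := IsAlgClosed.exists_root r (mt isUnit_iff_degree_eq_zero.2 hru)
  obtain ⟨n, hn⟩ := h z
  obtain ⟨s, hs⟩ := (C_dvd_iff_dvd_coeff r p).1 hr n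
  exact hn (by rw [hs, eval_mul, hz.eq_zero, zero_mul])

theorem squarefree_quadratic_of_discrim_ne_zero {k : Type*} [Field k] [IsAlgClosed k]
    {a b c : k[X]} (hroot : ∀ z, a.eval z ≠ 0 ∨ b.eval z ≠ 0 ∨ c.eval z ≠ 0)
    (hd : discrim a b c ≠ 0) : Squarefree (C a * X ^ 2 + C b * X + C c) := by
  set f := algebraMap k[X] (FractionRing k[X])
  have hf : Function.Injective f := IsFractionRing.injective _ _
  refine IsPrimitive.squarefree_of_separable_map hf ?_ ?_
  · refine isPrimitive_of_forall_exists_eval_coeff_ne_zero fun z => ?_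
    rcases hroot z with h | h | h
    · exact ⟨2, by simpa [coeff_X] using h⟩
    · exact ⟨1, by simpa [coeff_X] using h⟩
    · exact ⟨0, by simpa [coeff_X] using h⟩
  · have hd' : discrim (f a) (f b) (f c) ≠ 0 := by
      rw [discrim, ← map_pow, ← map_ofNat f 4, ← map_mul, ← map_mul, ← map_sub]
      exact (map_ne_zero_iff f hf).2 hd
    simpa only [Polynomial.map_add, Polynomial.map_mul, Polynomial.map_pow, map_C, map_X]
      using separable_of_isUnit_discrim hd'.isUnit

theorem discrim_of_quadratics {R : Type*} [CommRing R] (a₀ a₁ a₂ b₀ b₁ b₂ c₀ c₁ c₂ : R) :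
    discrim (C a₀ + C a₁ * X + C a₂ * X ^ 2) (C b₀ + C b₁ * X + C b₂ * X ^ 2)
      (C c₀ + C c₁ * X + C c₂ * X ^ 2) =
    C (discrim a₀ b₀ c₀) + C (2 * b₀ * b₁ - 4 * (a₀ * c₁ + a₁ * c₀)) * X +
      C (b₁ ^ 2 + 2 * b₀ * b₂ - 4 * (a₀ * c₂ + a₁ * c₁ + a₂ * c₀)) * X ^ 2 +
      C (2 * b₁ * b₂ - 4 * (a₁ * c₂ + a₂ * c₁)) * X ^ 3 + C (discrim a₂ b₂ c₂) * X ^ 4 := by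
  simp only [discrim, map_add, map_sub, map_mul, map_pow, map_ofNat]
  ring

end Polynomial

theorem eq_zero_of_add_mul_add_mul_sq_eq_zero_of_re_pos {a b c : ℝ} (ha : 0 ≤ a) (hb : 0 ≤ b)
    (hc : 0 ≤ c) {z : ℂ} (hz : 0 < z.re) (h : (a : ℂ) + b * z + c * z ^ 2 = 0) :
    a = 0 ∧ b = 0 ∧ c = 0 := by
  have hre := congrArg Complex.re h
  have him := congrArg Complex.im h
  simp only [pow_two, Complex.add_re, Complex.add_im, Complex.mul_re, Complex.mul_im,
    Complex.ofReal_re, Complex.ofReal_im, Complex.zero_re, Complex.zero_im] at hre him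
  by_cases hv : z.im = 0
  · rw [hv] at hre
    have hbu := mul_nonneg hb hz.le
    have hcu := mul_nonneg hc (mul_self_nonneg z.re)
    refine ⟨by linarith, (mul_eq_zero.1 (by linarith : b * z.re = 0)).resolve_right hz.ne',
      (mul_eq_zero.1 (by linarith : c * (z.re * z.re) = 0)).resolve_right (by positivity)⟩
  · have hbc : b + 2 * c * z.re = 0 :=
      (mul_eq_zero.1 (by linear_combination him : z.im * (b + 2 * c * z.re) = 0)).resolve_left hv
    obtain rfl : b = 0 := by nlinarith [mul_nonneg hc hz.le]
    obtain rfl : c = 0 := by nlinarith [mul_nonneg hc hz.le]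
    exact ⟨by simpa using hre, rfl, rfl⟩

theorem eq_zero_or_re_pos_of_sub_add_mul_sq_eq_zero {a c : ℝ} (ha : 0 ≤ a) (hc : 0 ≤ c) {z : ℂ}
    (h : (a : ℂ) - z + c * z ^ 2 = 0) : z = 0 ∨ 0 < z.re := by
  have hre := congrArg Complex.re h
  have him := congrArg Complex.im h
  simp only [pow_two, Complex.add_re, Complex.add_im, Complex.sub_re, Complex.sub_im,
    Complex.mul_re, Complex.mul_im, Complex.ofReal_re, Complex.ofReal_im, Complex.zero_re,
    Complex.zero_im] at hre him
  by_cases hv : z.im = 0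
  · rw [hv] at hre
    have hu : 0 ≤ z.re := by nlinarith [mul_nonneg hc (mul_self_nonneg z.re)]
    rcases hu.eq_or_lt with h0 | hpos
    · exact Or.inl (Complex.ext h0.symm hv)
    · exact Or.inr hpos
  · have hcu : 2 * c * z.re - 1 = 0 :=
      (mul_eq_zero.1 (by linear_combination him : z.im * (2 * c * z.re - 1) = 0)).resolve_left hv
    exact Or.inr (by nlinarith)

/-- The hypotheses `h₀, …, h₄` say that the coefficients of
`discrim (a₀ + a₁ X + a₂ X²) (b₀ - X + b₂ X²) (c₀ + c₁ X + c₂ X²)` vanish. -/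
theorem coeffs_eq_zero_of_discrim_eq_zero {a₀ a₁ a₂ b₀ b₂ c₀ c₁ c₂ : ℝ} (ha₀ : 0 ≤ a₀)
    (ha₁ : 0 ≤ a₁) (ha₂ : 0 ≤ a₂) (hb₀ : 0 ≤ b₀) (hb₂ : 0 ≤ b₂) (hc₀ : 0 ≤ c₀) (hc₁ : 0 ≤ c₁)
    (hc₂ : 0 ≤ c₂) (h₀ : b₀ ^ 2 - 4 * a₀ * c₀ = 0) (h₁ : -(2 * b₀) - 4 * (a₀ * c₁ + a₁ * c₀) = 0)
    (h₂ : 1 + 2 * b₀ * b₂ - 4 * (a₀ * c₂ + a₁ * c₁ + a₂ * c₀) = 0)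
    (h₃ : -(2 * b₂) - 4 * (a₁ * c₂ + a₂ * c₁) = 0) (h₄ : b₂ ^ 2 - 4 * a₂ * c₂ = 0) :
    b₀ = 0 ∧ b₂ = 0 ∧ (a₀ = 0 ∧ c₀ = 0 ∨ a₁ = 0 ∧ a₂ = 0 ∨ a₀ = 0 ∧ a₁ = 0) := by
  have h01 := mul_nonneg ha₀ hc₁
  have h10 := mul_nonneg ha₁ hc₀
  have h12 := mul_nonneg ha₁ hc₂
  have h21 := mul_nonneg ha₂ hc₁
  obtain rfl : b₀ = 0 := by linarith
  obtain rfl : b₂ = 0 := by linarith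
  refine ⟨rfl, rfl, ?_⟩
  have left_eq_zero : ∀ {x y : ℝ}, x * y = 0 → 0 < y → x = 0 := fun hxy hy =>
    (mul_eq_zero.1 hxy).resolve_right hy.ne'
  have right_eq_zero : ∀ {x y : ℝ}, x * y = 0 → 0 < x → y = 0 := fun hxy hx =>
    (mul_eq_zero.1 hxy).resolve_left hx.ne'
  -- one of the three products in `h₂` is positive; each case kills the other products
  rcases (mul_nonneg ha₀ hc₂).eq_or_lt with h02 | h02
  · rcases (mul_nonneg ha₁ hc₁).eq_or_lt with h11 | h11
    · have hc₀' := pos_of_mul_pos_right (by nlinarith : 0 < a₂ * c₀) ha₂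
      exact Or.inr (Or.inr ⟨left_eq_zero (by linarith) hc₀', left_eq_zero (by linarith) hc₀'⟩)
    · exact Or.inl ⟨left_eq_zero (by linarith) (pos_of_mul_pos_right h11 ha₁),
        right_eq_zero (by linarith) (pos_of_mul_pos_left h11 hc₁)⟩
  · have hc₂' := pos_of_mul_pos_right h02 ha₀
    exact Or.inr (Or.inl ⟨left_eq_zero (by linarith) hc₂', left_eq_zero (by linarith) hc₂'⟩)

namespace SmallStepModel

variable (M : SmallStepModel)

/-- `colPoly j = Σᵢ p_{i,j} x^{1-i}`, so that
`K = colPoly (-1) y² + (colPoly 0 - x) y + colPoly 1`. -/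
noncomputable def colPoly (j : ℤ) : ℂ[X] :=
  C (M.p 1 j : ℂ) + C (M.p 0 j : ℂ) * X + C (M.p (-1) j : ℂ) * X ^ 2

theorem p_zero_zero : M.p 0 0 = 0 :=
  not_not.1 fun h => (M.supp 0 0 h).2 rfl

theorem eval_colPoly (j : ℤ) (z : ℂ) :
    (M.colPoly j).eval z = M.p 1 j + M.p 0 j * z + M.p (-1) j * z ^ 2 := by
  simp [colPoly]

theorem equivMvPolynomial_colPoly :
    Bivariate.equivMvPolynomial ℂ
      (C (M.colPoly (-1)) * X ^ 2 + C (M.colPoly 0 - X) * X + C (M.colPoly 1)) =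
      kernelPoly M := by
  simp only [colPoly, Int.reduceNeg, map_add, map_mul, map_pow, p_zero_zero,
    Complex.ofReal_zero, map_zero, zero_mul, add_zero, map_sub, Bivariate.equivMvPolynomial_C_C,
    Bivariate.equivMvPolynomial_C_X, Fin.isValue, Bivariate.equivMvPolynomial_X, kernelPoly,
    SmallStepGrid, sum_product, mem_insert, neg_eq_zero, one_ne_zero, mem_singleton,
    reduceCtorEq, or_self, not_false_eq_true, sum_insert, sub_neg_eq_add, Int.reduceAdd,
    Int.reduceToNat, zero_ne_one, sub_zero, Int.toNat_one, pow_one, sum_singleton, sub_self,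
    Int.toNat_zero, pow_zero, mul_one, zero_add]
  ring

variable {M}

/-- A root of `colPoly 0 - X` is `0` or lies in the right half-plane, where a quadratic with
nonnegative coefficients has no root unless it vanishes. -/
theorem eval_colPoly_ne_zero (hnd : M.NonDegenerate) (z : ℂ) :
    (M.colPoly (-1)).eval z ≠ 0 ∨ (M.colPoly 0 - X).eval z ≠ 0 ∨ (M.colPoly 1).eval z ≠ 0 := by
  by_contra! h
  obtain ⟨hA, hB, hC⟩ := h
  simp only [eval_sub, eval_X, eval_colPoly, p_zero_zero, Complex.ofReal_zero, zero_mul,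
    add_zero] at hA hB hC
  rcases eq_zero_or_re_pos_of_sub_add_mul_sq_eq_zero (M.nonneg 1 0) (M.nonneg (-1) 0) (z := z)
    (by linear_combination hB) with rfl | hz
  · simp only [mul_zero, add_zero, ne_eq, OfNat.ofNat_ne_zero, not_false_eq_true, zero_pow,
      sub_zero, Complex.ofReal_eq_zero] at hA hB hC
    exact hnd 0 ⟨hC, hB, hA⟩
  · obtain ⟨h₁, h₀, hm₁⟩ := eq_zero_of_add_mul_add_mul_sq_eq_zero_of_re_pos (M.nonneg _ _)
      (M.nonneg _ _) (M.nonneg _ _) hz hA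
    exact hnd 2 ⟨h₁, h₀, hm₁⟩

theorem discrim_colPoly_ne_zero (hnd : M.NonDegenerate) :
    discrim (M.colPoly (-1)) (M.colPoly 0 - X) (M.colPoly 1) ≠ 0 := by
  intro h
  have hB : M.colPoly 0 - X = C (M.p 1 0 : ℂ) + C (-1) * X + C (M.p (-1) 0 : ℂ) * X ^ 2 := by
    simp only [colPoly, p_zero_zero, Complex.ofReal_zero, map_zero, zero_mul, map_neg, map_one]
    ring
  rw [hB, colPoly, colPoly, discrim_of_quadratics] at h
  have hcoeff (k : ℕ) := congrArg (coeff · k) h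
  have h₀ := hcoeff 0
  have h₁ := hcoeff 1
  have h₂ := hcoeff 2
  have h₃ := hcoeff 3
  have h₄ := hcoeff 4
  simp only [coeff_add, coeff_C_mul_X_pow, coeff_C_mul_X, coeff_C, coeff_zero] at h₀ h₁ h₂ h₃ h₄
  norm_num [discrim] at h₀ h₁ h₂ h₃ h₄
  obtain ⟨hb₀, hb₂, h | h | h⟩ := coeffs_eq_zero_of_discrim_eq_zero (M.nonneg 1 (-1))
    (M.nonneg 0 (-1)) (M.nonneg (-1) (-1)) (M.nonneg 1 0) (M.nonneg (-1) 0) (M.nonneg 1 1)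
    (M.nonneg 0 1) (M.nonneg (-1) 1) (by exact_mod_cast h₀) (by exact_mod_cast h₁)
    (by exact_mod_cast h₂) (by exact_mod_cast h₃) (by exact_mod_cast h₄)
  · exact hnd 0 ⟨h.2, hb₀, h.1⟩
  · exact hnd 3 ⟨h.1, h.2, hb₂⟩
  · exact hnd 1 ⟨hb₀, h.1, h.2⟩

theorem squarefree_kernelPoly (hnd : M.NonDegenerate) : Squarefree (kernelPoly M) := by
  rw [← equivMvPolynomial_colPoly]
  exact (squarefree_quadratic_of_discrim_ne_zero (eval_colPoly_ne_zero hnd)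
    (discrim_colPoly_ne_zero hnd)).map_mulEquiv (Bivariate.equivMvPolynomial ℂ).toMulEquiv

end SmallStepModel

theorem kernel_dvd_of_vanishing_on_kernel_curve_general (M : SmallStepModel)
    (hnd : M.NonDegenerate)
    (N : MvPolynomial (Fin 2) ℂ)
    (hvanish : ∀ a : Fin 2 → ℂ,
      MvPolynomial.eval a (kernelPoly M) = 0 → MvPolynomial.eval a N = 0) :
    kernelPoly M ∣ N := by
  have hrad : N ∈ (Ideal.span {kernelPoly M}).radical := by
    rw [← MvPolynomial.vanishingIdeal_zeroLocus_eq_radical (K := ℂ)]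
    exact fun a ha => hvanish a (ha _ (Ideal.subset_span rfl))
  obtain ⟨n, hn⟩ := hrad
  exact (M.squarefree_kernelPoly hnd).isRadical n N (Ideal.mem_span_singleton.1 hn)

/-- For a non-degenerate model with small steps and zero drift, any polynomial
`N ∈ ℂ[x,y]` vanishing at every complex zero of the kernel `K` is divisible by `K`. -/
theorem kernel_dvd_of_vanishing_on_kernel_curve (M : SmallStepModel)
    (hnd : M.NonDegenerate) (hzd : M.ZeroDrift)
    (N : MvPolynomial (Fin 2) ℂ)
    (hvanish : ∀ a : Fin 2 → ℂ,
      MvPolynomial.eval a (kernelPoly M) = 0 → MvPolynomial.eval a N = 0) :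
    kernelPoly M ∣ N :=
  kernel_dvd_of_vanishing_on_kernel_curve_general M hnd N hvanish
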